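/- Let H be an infinite-dimensional separable complex Hilbert space, let a > 0, and let X_a be the set of all bounded self-adjoint operators A on H with ‖A‖ ≤ a, equipped with the topology of strong operator convergence. Then the set of A ∈ X_a whose spectrum equals the full interval [−a, a] contains a dense G_δ subset of X_a. -/

import Mathlib

open scoped InnerProductSpace ComplexConjugate ENNReal NNReal
noncomputable section
namespace SaGen

local notation "ℓ2" => lp (fun _ : ℕ => ℂ) 2

lemma memℓp_diag (c : ℕ → ℝ) (a : ℝ) (hc : ∀ i, |c i| ≤ a) (f : ℓ2) :
    Memℓp (fun i => (c i : ℂ) * f i) 2 := by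
  apply memℓp_gen
  have hf : Summable fun i => ‖f i‖ ^ (2 : ℝ≥0∞).toReal :=
    (lp.memℓp f).summable (by norm_num)
  refine Summable.of_nonneg_of_le (fun i => Real.rpow_nonneg (norm_nonneg _) _)
    (fun i => ?_) (hf.mul_left (a ^ (2 : ℝ≥0∞).toReal))
  have h1 : ‖(c i : ℂ) * f i‖ = |c i| * ‖f i‖ := by
    rw [norm_mul, Complex.norm_real, Real.norm_eq_abs]
  rw [h1, Real.mul_rpow (abs_nonneg _) (norm_nonneg _)]
  gcongr
  exact hc i

def diagLM (c : ℕ → ℝ) (a : ℝ) (hc : ∀ i, |c i| ≤ a) : ℓ2 →ₗ[ℂ] ℓ2 where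
  toFun f := ⟨fun i => (c i : ℂ) * f i, memℓp_diag c a hc f⟩
  map_add' f g := by
    apply lp.ext
    funext i
    simp [mul_add]
    rfl
  map_smul' z f := by
    apply lp.ext
    funext i
    simp [lp.coeFn_smul]
    ring

lemma diagLM_norm_le (c : ℕ → ℝ) (a : ℝ) (ha : 0 ≤ a) (hc : ∀ i, |c i| ≤ a) (f : ℓ2) :
    ‖diagLM c a hc f‖ ≤ a * ‖f‖ := by
  have hr : (0:ℝ) < (2 : ℝ≥0∞).toReal := by norm_num
  have h1 := lp.hasSum_norm hr (diagLM c a hc f)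
  have h2 := (lp.hasSum_norm hr f).mul_left (a ^ (2 : ℝ≥0∞).toReal)
  have hle : ‖diagLM c a hc f‖ ^ (2 : ℝ≥0∞).toReal
      ≤ a ^ (2 : ℝ≥0∞).toReal * ‖f‖ ^ (2 : ℝ≥0∞).toReal := by
    refine hasSum_le (fun i => ?_) h1 h2
    have hco : (diagLM c a hc f) i = (c i : ℂ) * f i := rfl
    rw [hco]
    have h1' : ‖(c i : ℂ) * f i‖ = |c i| * ‖f i‖ := by
      rw [norm_mul, Complex.norm_real, Real.norm_eq_abs]
    rw [h1', Real.mul_rpow (abs_nonneg _) (norm_nonneg _)]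
    gcongr
    exact hc i
  rw [← Real.mul_rpow ha (norm_nonneg _)] at hle
  have h2' : (2 : ℝ≥0∞).toReal = ((2:ℕ):ℝ) := by norm_num
  rw [h2', Real.rpow_natCast, Real.rpow_natCast] at hle
  have h3 := Real.sqrt_le_sqrt hle
  rwa [Real.sqrt_sq (norm_nonneg _), Real.sqrt_sq (mul_nonneg ha (norm_nonneg _))] at h3

def diagCLM (c : ℕ → ℝ) (a : ℝ) (ha : 0 ≤ a) (hc : ∀ i, |c i| ≤ a) : ℓ2 →L[ℂ] ℓ2 :=
  LinearMap.mkContinuous (diagLM c a hc) a (diagLM_norm_le c a ha hc)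

lemma diagCLM_apply (c : ℕ → ℝ) (a : ℝ) (ha : 0 ≤ a) (hc : ∀ i, |c i| ≤ a) (f : ℓ2) (i : ℕ) :
    (diagCLM c a ha hc f) i = (c i : ℂ) * f i := rfl

lemma diagCLM_norm (c : ℕ → ℝ) (a : ℝ) (ha : 0 ≤ a) (hc : ∀ i, |c i| ≤ a) (f : ℓ2) :
    ‖diagCLM c a ha hc f‖ ≤ a * ‖f‖ :=
  diagLM_norm_le c a ha hc f

lemma diagCLM_symm (c : ℕ → ℝ) (a : ℝ) (ha : 0 ≤ a) (hc : ∀ i, |c i| ≤ a) (f g : ℓ2) :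
    ⟪diagCLM c a ha hc f, g⟫_ℂ = ⟪f, diagCLM c a ha hc g⟫_ℂ := by
  rw [lp.inner_eq_tsum, lp.inner_eq_tsum]
  apply tsum_congr
  intro i
  rw [diagCLM_apply, diagCLM_apply]
  simp only [RCLike.inner_apply, map_mul, Complex.conj_ofReal]
  ring

lemma diagCLM_single (c : ℕ → ℝ) (a : ℝ) (ha : 0 ≤ a) (hc : ∀ i, |c i| ≤ a) (k : ℕ) :
    diagCLM c a ha hc (lp.single 2 k 1) = (c k : ℂ) • lp.single 2 k 1 := by
  apply lp.ext
  funext j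
  have h2 : (((c k : ℂ) • lp.single 2 k (1:ℂ) : ℓ2) : ℕ → ℂ) j
      = (c k : ℂ) * ((lp.single 2 k (1:ℂ) : ℓ2) : ℕ → ℂ) j := by
    rw [lp.coeFn_smul, Pi.smul_apply, smul_eq_mul]
  show (c j : ℂ) * ((lp.single 2 k (1:ℂ) : ℓ2) : ℕ → ℂ) j = _
  rw [h2]
  rcases eq_or_ne j k with rfl | hjk
  · rfl
  · rw [lp.single_apply_ne _ _ _ hjk, mul_zero, mul_zero]

theorem exists_diag_op (K : Type*) [NormedAddCommGroup K] [InnerProductSpace ℂ K]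
    [CompleteSpace K] [SecondCountableTopology K]
    (hK : ¬ FiniteDimensional ℂ K) (c : ℕ → ℝ) (a : ℝ) (ha : 0 ≤ a) (hc : ∀ i, |c i| ≤ a) :
    ∃ D : K →L[ℂ] K, IsSelfAdjoint D ∧ (∀ x, ‖D x‖ ≤ a * ‖x‖) ∧
      ∀ k : ℕ, ∃ φ : K, ‖φ‖ = 1 ∧ D φ = (c k : ℂ) • φ := by
  obtain ⟨w, b, hbw⟩ := exists_hilbertBasis ℂ K
  have hon : Orthonormal ℂ ((↑) : w → K) := hbw ▸ b.orthonormal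
  have hdist : ∀ x ∈ w, ∀ y ∈ w, x ≠ y → (1:ℝ) ≤ dist x y := by
    intro x hx y hy hxy
    have hxy' : (⟨x, hx⟩ : w) ≠ ⟨y, hy⟩ := fun h => hxy (congrArg Subtype.val h)
    have hinner : ⟪(x:K), y⟫_ℂ = 0 := hon.2 hxy'
    have hsq : ‖x - y‖ ^ 2 = 2 := by
      rw [norm_sub_sq (𝕜 := ℂ), hinner, hon.1 ⟨x, hx⟩, hon.1 ⟨y, hy⟩]
      norm_num
    rw [dist_eq_norm]
    by_contra hlt
    push_neg at hlt
    nlinarith [norm_nonneg (x - y)]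
  have hwc : w.Countable := by
    have hdisj : w.PairwiseDisjoint (fun x => Metric.ball x (1/2)) := by
      intro x hx y hy hxy
      apply Metric.ball_disjoint_ball
      have := hdist x hx y hy hxy
      linarith
    exact hdisj.countable_of_isOpen (fun x _ => Metric.isOpen_ball)
      (fun x _ => ⟨x, Metric.mem_ball_self (by norm_num)⟩)
  have hwinf : w.Infinite := by
    by_contra hfin
    rw [Set.not_infinite] at hfin
    apply hK
    have hfd : FiniteDimensional ℂ (Submodule.span ℂ (Set.range ⇑b)) := by
      rw [hbw, Subtype.range_coe]
      exact FiniteDimensional.span_of_finite ℂ hfin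
    have hcl : IsClosed ((Submodule.span ℂ (Set.range ⇑b)) : Set K) :=
      Submodule.closed_of_finiteDimensional _
    have hspan : Submodule.span ℂ (Set.range ⇑b) = ⊤ := by
      have := b.dense_span
      rwa [hcl.submodule_topologicalClosure_eq] at this
    rw [hspan] at hfd
    exact Submodule.topEquiv.finiteDimensional
  haveI := hwc.to_subtype
  haveI : Infinite w := hwinf.to_subtype
  haveI : Encodable w := Encodable.ofCountable w
  haveI : Denumerable w := Denumerable.ofEncodableOfInfinite w
  let e : ℕ ≃ w := (Denumerable.eqv w).symm
  have hv : Orthonormal ℂ (⇑b ∘ ⇑e) := b.orthonormal.comp ⇑e e.injective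
  have hrange : Set.range (⇑b ∘ ⇑e) = Set.range ⇑b := e.surjective.range_comp ⇑b
  let b' : HilbertBasis ℕ ℂ K := HilbertBasis.mk hv (by
    rw [hrange, b.dense_span])
  let U : K ≃ₗᵢ[ℂ] ℓ2 := b'.repr
  let M := diagCLM c a ha hc
  let D : K →L[ℂ] K :=
    ((U.symm.toContinuousLinearEquiv : ℓ2 ≃L[ℂ] K) : ℓ2 →L[ℂ] K).comp
      (M.comp ((U.toContinuousLinearEquiv : K ≃L[ℂ] ℓ2) : K →L[ℂ] ℓ2))
  have hDx : ∀ x, D x = U.symm (M (U x)) := fun x => rfl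
  refine ⟨D, ?_, ?_, ?_⟩
  · rw [ContinuousLinearMap.isSelfAdjoint_iff_isSymmetric]
    intro x y
    show ⟪D x, y⟫_ℂ = ⟪x, D y⟫_ℂ
    have h1 : ⟪D x, y⟫_ℂ = ⟪M (U x), U y⟫_ℂ := by
      conv_lhs => rw [hDx, show y = U.symm (U y) from (U.symm_apply_apply y).symm]
      exact U.symm.inner_map_map _ _
    have h2 : ⟪x, D y⟫_ℂ = ⟪U x, M (U y)⟫_ℂ := by
      conv_lhs => rw [hDx, show x = U.symm (U x) from (U.symm_apply_apply x).symm]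
      exact U.symm.inner_map_map _ _
    rw [h1, h2, diagCLM_symm]
  · intro x
    rw [hDx, U.symm.norm_map]
    calc ‖M (U x)‖ ≤ a * ‖U x‖ := diagCLM_norm c a ha hc _
      _ = a * ‖x‖ := by rw [U.norm_map]
  · intro k
    refine ⟨b' k, ?_, ?_⟩
    · have hcoe : ⇑b' = ⇑b ∘ ⇑e := HilbertBasis.coe_mk _ _
      rw [show b' k = (⇑b ∘ ⇑e) k from congrFun hcoe k]
      exact hv.1 k
    · rw [hDx]
      have h1 : U (b' k) = lp.single 2 k 1 := b'.repr_self k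
      rw [h1, diagCLM_single, map_smul]
      congr 1
      rw [← h1, U.symm_apply_apply]

end SaGen

/-- `Xa H a` is the set of bounded self-adjoint operators on `H` of norm at most `a`. -/
def Xa (H : Type*) [NormedAddCommGroup H] [InnerProductSpace ℂ H] [CompleteSpace H]
    (a : ℝ) : Type _ :=
  {A : H →L[ℂ] H // IsSelfAdjoint A ∧ ‖A‖ ≤ a}

/-- The strong operator topology on `Xa H a`: the topology of pointwise (strong)
convergence, i.e. the topology induced from the product topology on `H → H` via
`A ↦ (A : H → H)`. -/
instance XaSOT (H : Type*) [NormedAddCommGroup H] [InnerProductSpace ℂ H] [CompleteSpace H]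
    (a : ℝ) : TopologicalSpace (Xa H a) :=
  TopologicalSpace.induced (fun A : Xa H a => (A.1 : H → H)) Pi.topologicalSpace

/-- **Generically a bounded self-adjoint operator of norm `≤ a` has spectrum `[-a,a]`.**
On an infinite-dimensional separable complex Hilbert space, for a dense `G_δ` of
operators `A` in `X_a = {A self-adjoint, ‖A‖ ≤ a}` (strong operator topology), the
spectrum of `A` equals the full interval `[-a, a]`. -/
theorem sa_generic_full_spectrum (H : Type*) [NormedAddCommGroup H] [InnerProductSpace ℂ H]
    [CompleteSpace H] [TopologicalSpace.SeparableSpace H]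
    (hinf : ¬ FiniteDimensional ℂ H) (a : ℝ) (ha : 0 < a) :
    ∃ S : Set (Xa H a), IsGδ S ∧ Dense S ∧ ∀ A ∈ S,
      spectrum ℂ A.1 = (fun x : ℝ => (x : ℂ)) '' Set.Icc (-a) a := by
  classical
  haveI hnt : Nontrivial H := by
    by_contra hn
    rw [not_nontrivial_iff_subsingleton] at hn
    exact hinf inferInstance
  haveI : SecondCountableTopology H := UniformSpace.secondCountable_of_separable H
  set clamp : ℝ → ℝ := fun t => max (-a) (min a t) with hclampdef
  have hclamp_mem : ∀ t, clamp t ∈ Set.Icc (-a) a := fun t =>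
    ⟨le_max_left _ _, max_le (by linarith) (min_le_left _ _)⟩
  have hclamp_id : ∀ x ∈ Set.Icc (-a) a, clamp x = x := by
    intro x hx
    show max (-a) (min a x) = x
    rw [min_eq_right hx.2, max_eq_right hx.1]
  set qe : ℕ ≃ ℚ := (Denumerable.eqv ℚ).symm with hqe
  set c : ℕ → ℝ := fun k => clamp (qe k) with hcdef
  have hc : ∀ k, |c k| ≤ a := fun k =>
    abs_le.mpr ⟨(hclamp_mem _).1, (hclamp_mem _).2⟩
  set E : ℕ → ℕ → Set (Xa H a) := fun k n =>
    {A | ∃ ψ : H, ‖ψ‖ = 1 ∧ ‖A.1 ψ - (c k : ℂ) • ψ‖ < 1 / (n + 1)} with hEdef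
  have hEopen : ∀ k n, IsOpen (E k n) := by
    intro k n
    have hrw : E k n = ⋃ (ψ : H) (_ : ‖ψ‖ = 1),
        ((fun A : Xa H a => A.1 ψ) ⁻¹' Metric.ball ((c k : ℂ) • ψ) (1 / (n + 1))) := by
      ext A
      simp only [hEdef, Set.mem_iUnion, Set.mem_preimage, Metric.mem_ball, dist_eq_norm,
        Set.mem_setOf_eq, exists_prop]
    rw [hrw]
    refine isOpen_iUnion fun ψ => isOpen_iUnion fun _ => ?_
    have hcont : Continuous (fun A : Xa H a => A.1 ψ) :=
      (continuous_apply ψ).comp continuous_induced_dom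
    exact Metric.isOpen_ball.preimage hcont
  refine ⟨⋂ (k : ℕ) (n : ℕ), E k n, ?_, ?_, ?_⟩
  · exact IsGδ.iInter fun k => IsGδ.iInter fun n => (hEopen k n).isGδ
  · -- Density
    rw [dense_iff_inter_open]
    rintro U hU ⟨A, hA⟩
    obtain ⟨t, ht, rfl⟩ :
        ∃ t, IsOpen t ∧ (fun B : Xa H a => (B.1 : H → H)) ⁻¹' t = U := by
      rwa [isOpen_induced_iff] at hU
    obtain ⟨I, u, hu, hsub⟩ := isOpen_pi_iff.mp ht _ hA
    have hWfin : ((↑I : Set H) ∪ (A.1 '' ↑I)).Finite :=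
      I.finite_toSet.union (I.finite_toSet.image _)
    set W : Submodule ℂ H := Submodule.span ℂ ((↑I : Set H) ∪ (A.1 '' ↑I)) with hW
    haveI : FiniteDimensional ℂ W := FiniteDimensional.span_of_finite ℂ hWfin
    haveI : CompleteSpace W := FiniteDimensional.complete ℂ W
    haveI : CompleteSpace Wᗮ := W.isClosed_orthogonal.completeSpace_coe
    have hKinf : ¬ FiniteDimensional ℂ Wᗮ := by
      intro hfd
      apply hinf
      have hsup : W ⊔ Wᗮ = ⊤ := Submodule.sup_orthogonal_of_hasOrthogonalProjection
      have htop : FiniteDimensional ℂ (⊤ : Submodule ℂ H) := by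
        rw [← hsup]
        exact Submodule.finiteDimensional_sup W Wᗮ
      exact Submodule.topEquiv.finiteDimensional
    obtain ⟨D, hDsa, hDnorm, hDeig⟩ := SaGen.exists_diag_op Wᗮ hKinf c a ha.le hc
    set P : H →L[ℂ] H := W.subtypeL.comp (Submodule.orthogonalProjectionOnto W) with hPdef
    set T : H →L[ℂ] H := Wᗮ.subtypeL.comp (D.comp (Submodule.orthogonalProjectionOnto Wᗮ)) with hTdef
    set B0 : H →L[ℂ] H := P * A.1 * P + T with hB0
    have hB0x : ∀ x : H,
        B0 x = P (A.1 (P x)) + ((D (Submodule.orthogonalProjectionOnto Wᗮ x) : Wᗮ) : H) := fun x => rfl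
    have hPx : ∀ x : H, P x = ((Submodule.orthogonalProjectionOnto W x : W) : H) := fun x => rfl
    have hPsa : IsSelfAdjoint P := isSelfAdjoint_starProjection W
    have hPAP : IsSelfAdjoint (P * A.1 * P) := by
      have h := (A.2.1).conjugate P
      rwa [hPsa.star_eq] at h
    have hTsa : IsSelfAdjoint T := by
      have hadj : ContinuousLinearMap.adjoint T = T := by
        rw [hTdef, ContinuousLinearMap.adjoint_comp, ContinuousLinearMap.adjoint_comp,
          Submodule.adjoint_subtypeL, Submodule.adjoint_orthogonalProjection, hDsa.adjoint_eq]
        rfl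
      rw [IsSelfAdjoint, ContinuousLinearMap.star_eq_adjoint]
      exact hadj
    have hB0norm : ∀ x : H, ‖B0 x‖ ≤ a * ‖x‖ := by
      intro x
      have hperp : ⟪P (A.1 (P x)), ((D (Submodule.orthogonalProjectionOnto Wᗮ x) : Wᗮ) : H)⟫_ℂ = 0 := by
        have hmem : ((D (Submodule.orthogonalProjectionOnto Wᗮ x) : Wᗮ) : H) ∈ Wᗮ :=
          (D (Submodule.orthogonalProjectionOnto Wᗮ x)).2
        have hmem2 : P (A.1 (P x)) ∈ W := by
          rw [hPx]
          exact (Submodule.orthogonalProjectionOnto W (A.1 (P x))).2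
        exact (Submodule.mem_orthogonal W _).mp hmem _ hmem2
      have h1 : ‖B0 x‖ ^ 2 = ‖P (A.1 (P x))‖ ^ 2
          + ‖((D (Submodule.orthogonalProjectionOnto Wᗮ x) : Wᗮ) : H)‖ ^ 2 := by
        rw [hB0x]
        have h := norm_add_sq_eq_norm_sq_add_norm_sq_of_inner_eq_zero _ _ hperp
        simpa [pow_two] using h
      have hPle : ∀ y : H, ‖((Submodule.orthogonalProjectionOnto W y : W) : H)‖ ≤ ‖y‖ := by
        intro y
        have hy := Submodule.norm_sq_eq_add_norm_sq_projection y W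
        have hcoe : ‖((Submodule.orthogonalProjectionOnto W y : W) : H)‖ = ‖Submodule.orthogonalProjectionOnto W y‖ := rfl
        rw [hcoe]
        nlinarith [norm_nonneg (Submodule.orthogonalProjectionOnto W y), norm_nonneg y,
          norm_nonneg (Submodule.orthogonalProjectionOnto Wᗮ y)]
      have h2 : ‖P (A.1 (P x))‖ ≤ a * ‖(Submodule.orthogonalProjectionOnto W x : W)‖ := by
        rw [hPx]
        calc ‖((Submodule.orthogonalProjectionOnto W (A.1 (P x)) : W) : H)‖ ≤ ‖A.1 (P x)‖ := hPle _
          _ ≤ ‖A.1‖ * ‖P x‖ := A.1.le_opNorm _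
          _ ≤ a * ‖P x‖ := by
              have h := A.2.2
              have hn : (0:ℝ) ≤ ‖P x‖ := norm_nonneg _
              nlinarith
          _ = a * ‖(Submodule.orthogonalProjectionOnto W x : W)‖ := by
              rw [hPx]
              rfl
      have h3 : ‖((D (Submodule.orthogonalProjectionOnto Wᗮ x) : Wᗮ) : H)‖
          ≤ a * ‖Submodule.orthogonalProjectionOnto Wᗮ x‖ := by
        have hcoe : ‖((D (Submodule.orthogonalProjectionOnto Wᗮ x) : Wᗮ) : H)‖
            = ‖D (Submodule.orthogonalProjectionOnto Wᗮ x)‖ := rfl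
        rw [hcoe]
        exact hDnorm (Submodule.orthogonalProjectionOnto Wᗮ x)
      have h4 := Submodule.norm_sq_eq_add_norm_sq_projection x W
      have hsq2 : ‖B0 x‖ ^ 2 ≤ (a * ‖x‖) ^ 2 := by
        have e2 := pow_le_pow_left₀ (norm_nonneg (P (A.1 (P x)))) h2 2
        have e3 := pow_le_pow_left₀
          (norm_nonneg ((D (Submodule.orthogonalProjectionOnto Wᗮ x) : Wᗮ) : H)) h3 2
        rw [h1]
        rw [mul_pow] at e2 e3 ⊢
        nlinarith [sq_nonneg a]
      have h5 := Real.sqrt_le_sqrt hsq2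
      rwa [Real.sqrt_sq (norm_nonneg _),
        Real.sqrt_sq (mul_nonneg ha.le (norm_nonneg _))] at h5
    have hB0I : ∀ ψ ∈ I, B0 ψ = A.1 ψ := by
      intro ψ hψ
      have hψW : ψ ∈ W := Submodule.subset_span (Or.inl hψ)
      have hAψW : A.1 ψ ∈ W := Submodule.subset_span (Or.inr ⟨ψ, hψ, rfl⟩)
      have hPψ : P ψ = ψ := by rw [hPx]; exact Submodule.starProjection_eq_self_iff.mpr hψW
      have hPAψ : P (A.1 ψ) = A.1 ψ := by
        rw [hPx]; exact Submodule.starProjection_eq_self_iff.mpr hAψW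
      have hKψ : Submodule.orthogonalProjectionOnto Wᗮ ψ = 0 :=
        Submodule.orthogonalProjectionOnto_apply_of_mem_orthogonal
          (W.le_orthogonal_orthogonal hψW)
      rw [hB0x, hPψ, hPAψ, hKψ, map_zero]
      simp
    have hnorm' : ‖B0‖ ≤ a := B0.opNorm_le_bound ha.le hB0norm
    refine ⟨⟨B0, hPAP.add hTsa, hnorm'⟩, ?_, ?_⟩
    · show (⇑B0 : H → H) ∈ t
      apply hsub
      rw [Set.mem_pi]
      intro ψ hψ
      rw [hB0I ψ hψ]
      exact (hu ψ hψ).2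
    · refine Set.mem_iInter.mpr fun k => Set.mem_iInter.mpr fun n => ?_
      obtain ⟨φ, hφ1, hφ2⟩ := hDeig k
      simp only [hEdef, Set.mem_setOf_eq]
      refine ⟨(φ : H), hφ1, ?_⟩
      have hPφ : Submodule.orthogonalProjectionOnto W (φ : H) = 0 :=
        Submodule.orthogonalProjectionOnto_eq_zero_iff.mpr φ.2
      have hKφ : Submodule.orthogonalProjectionOnto Wᗮ (φ : H) = φ :=
        Submodule.orthogonalProjectionOnto_mem_subspace_eq_self φ
      have h0 : P (φ : H) = 0 := by
        rw [hPx, hPφ, Submodule.coe_zero]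
      have hBφ : B0 (φ : H) = (c k : ℂ) • (φ : H) := by
        rw [hB0x, h0, map_zero, map_zero, hKφ, hφ2, zero_add, Submodule.coe_smul]
      rw [hBφ, sub_self, norm_zero]
      positivity
  · -- spectrum computation
    rintro A hA
    have hAsa := A.2.1
    apply Set.Subset.antisymm
    · intro z hz
      have hz_re := hAsa.mem_spectrum_eq_re hz
      have hzn : ‖z‖ ≤ a := (spectrum.norm_le_norm_of_mem hz).trans A.2.2
      have hre : |z.re| ≤ ‖z‖ := by
        exact Complex.abs_re_le_norm z
      have hre' := abs_le.mp (hre.trans hzn)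
      exact ⟨z.re, ⟨hre'.1, hre'.2⟩, hz_re.symm⟩
    · have hq : ∀ k : ℕ, ((c k : ℝ) : ℂ) ∈ spectrum ℂ A.1 := by
        intro k
        by_contra hk
        rw [spectrum.notMem_iff] at hk
        obtain ⟨v, hv⟩ := hk
        set C : H →L[ℂ] H := (↑v⁻¹ : H →L[ℂ] H) with hC
        obtain ⟨nn, hnn⟩ := exists_nat_gt ‖C‖
        have hE := Set.mem_iInter.mp (Set.mem_iInter.mp hA k) nn
        simp only [hEdef, Set.mem_setOf_eq] at hE
        obtain ⟨ψ, hψ1, hψ2⟩ := hE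
        set M : H →L[ℂ] H := algebraMap ℂ (H →L[ℂ] H) ((c k : ℝ) : ℂ) - A.1 with hM
        have hCM : C * M = 1 := by
          rw [hC, ← hv]
          exact v.inv_mul
        have hψeq : C (M ψ) = ψ := by
          have h := congrFun (congrArg (fun (L : H →L[ℂ] H) => (L : H → H)) hCM) ψ
          simpa [ContinuousLinearMap.mul_apply] using h
        have hMψ : M ψ = (c k : ℂ) • ψ - A.1 ψ := by
          rw [hM, ContinuousLinearMap.sub_apply, Algebra.algebraMap_eq_smul_one,
            ContinuousLinearMap.smul_apply, ContinuousLinearMap.one_apply]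
        have hb : (1:ℝ) ≤ ‖C‖ * ‖M ψ‖ := by
          calc (1:ℝ) = ‖ψ‖ := hψ1.symm
            _ = ‖C (M ψ)‖ := by rw [hψeq]
            _ ≤ ‖C‖ * ‖M ψ‖ := C.le_opNorm _
        have hMn : ‖M ψ‖ < 1 / ((nn:ℝ) + 1) := by
          rw [hMψ, norm_sub_rev]
          exact hψ2
        have hCpos : (0:ℝ) ≤ ‖C‖ := norm_nonneg _
        have hchain : ‖C‖ * (1 / ((nn:ℝ) + 1)) < 1 := by
          rw [mul_one_div, div_lt_one (by positivity)]
          linarith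
        have hfin : (1:ℝ) < 1 :=
          hb.trans_lt ((mul_le_mul_of_nonneg_left hMn.le hCpos).trans_lt hchain)
        exact absurd hfin (lt_irrefl 1)
      rintro z ⟨x, hx, rfl⟩
      have hgc : Continuous (fun t : ℝ => ((clamp t : ℝ) : ℂ)) :=
        Complex.continuous_ofReal.comp
          (continuous_const.max (continuous_const.min continuous_id))
      have hxg : ((x : ℝ) : ℂ) = ((clamp x : ℝ) : ℂ) := by rw [hclamp_id x hx]
      have hmem : ((x:ℝ) : ℂ) ∈
          closure ((fun t : ℝ => ((clamp t : ℝ) : ℂ)) '' Set.range ((↑) : ℚ → ℝ)) := by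
        apply image_closure_subset_closure_image hgc
        rw [Rat.denseRange_cast.closure_eq]
        exact ⟨x, trivial, hxg.symm⟩
      have hsubset : (fun t : ℝ => ((clamp t : ℝ) : ℂ)) '' Set.range ((↑) : ℚ → ℝ)
          ⊆ spectrum ℂ A.1 := by
        rintro _ ⟨_, ⟨q, rfl⟩, rfl⟩
        have h := hq (qe.symm q)
        simpa [hcdef, Equiv.apply_symm_apply] using h
      exact ((spectrum.isClosed (𝕜 := ℂ) A.1).closure_subset_iff.mpr hsubset) hmem
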